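/- arXiv:2004.13962 — 2 statements merged into one kernel-verified Lean document; each statement's English description precedes it below -/
import Mathlib

section
/- (Proposition 1, distance property) Let p ≥ 1, n ≥ 1, X_1, …, X_n ∈ ℝ^p, A_1, …, A_n ∈ {0,1} with n_0 ≥ 1 and n_1 ≥ 1, and let w ∈ ℝ^n satisfy Σ_{i=1}^n w_i 1{A_i = a} = n_a for a ∈ {0,1} and w_i > 0 for all i. Then for each a ∈ {0,1}, E(F_{n,a,w}, F_n) ≥ 0, and E(F_{n,a,w}, F_n) = 0 if and only if φ_{n,a,w}(t) = φ_n(t) for every t ∈ ℝ^p. -/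
open MeasureTheory Finset

noncomputable section

/-- Number of sample points in treatment group `a`. -/
def groupCard {n : ℕ} (A : Fin n → Bool) (a : Bool) : ℕ :=
  (Finset.univ.filter fun i => A i = a).card

/-- Weighted energy distance between the `w`-weighted group `a` and the pooled sample. -/
def energyDist {p n : ℕ} (X : Fin n → EuclideanSpace ℝ (Fin p)) (A : Fin n → Bool)
    (w : Fin n → ℝ) (a : Bool) : ℝ :=
  (2 / ((groupCard A a : ℝ) * n)) *
      ∑ i, ∑ j, (if A i = a then w i else 0) * ‖X i - X j‖
    - (1 / (groupCard A a : ℝ) ^ 2) *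
      ∑ i, ∑ j, (if A i = a ∧ A j = a then w i * w j else 0) * ‖X i - X j‖
    - (1 / (n : ℝ) ^ 2) * ∑ i, ∑ j, ‖X i - X j‖

/-- Weighted empirical characteristic function of group `a`. -/
def wECHF {p n : ℕ} (X : Fin n → EuclideanSpace ℝ (Fin p)) (A : Fin n → Bool)
    (w : Fin n → ℝ) (a : Bool) (t : EuclideanSpace ℝ (Fin p)) : ℂ :=
  (1 / (groupCard A a : ℂ)) *
    ∑ i, (if A i = a then (w i : ℂ) else 0) *
      Complex.exp (Complex.I * ((inner ℝ t (X i) : ℝ) : ℂ))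

/-- Pooled empirical characteristic function. -/
def pooledECHF {p n : ℕ} (X : Fin n → EuclideanSpace ℝ (Fin p))
    (t : EuclideanSpace ℝ (Fin p)) : ℂ :=
  (1 / (n : ℂ)) * ∑ i, Complex.exp (Complex.I * ((inner ℝ t (X i) : ℝ) : ℂ))

/-- The constant `C_p = π^((1+p)/2) / Γ((1+p)/2)`. -/
def Cp (p : ℕ) : ℝ := Real.pi ^ (((1 : ℝ) + p) / 2) / Real.Gamma (((1 : ℝ) + p) / 2)

/-- The weight function `ω(t) = 1 / (C_p ‖t‖^(1+p))`. -/
def omegaW (p : ℕ) (t : EuclideanSpace ℝ (Fin p)) : ℝ :=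
  1 / (Cp p * ‖t‖ ^ (1 + p))

/-!
Write `c i` for the mass of the signed measure `F_{n,a,w} - F_n` at `X i`, so that `∑ c = 0`, the
energy distance is `-∑ c_i c_j ‖X_i - X_j‖` and `φ_{n,a,w} - φ_n` is `t ↦ ∑ c_i exp(i⟪t, X_i⟫)`.

On the line, if `F` is the distribution function of `∑ c_i δ_{y_i}`, then
`∑ c_i c_j |y_i - y_j| = -2 ∫ F²`, because `∫ 1{max(y_i, y_j) ≤ s} ds` over a large interval
is `M - max(y_i, y_j)` and `2 max(a, b) = a + b + |a - b|`. So this sum is `≤ 0`, and when it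
vanishes the right-continuous step function `F` is zero, so all point masses of
`∑ c_i δ_{y_i}` cancel.

In `ℝ^p`, rotation invariance gives `∫ |⟪u, z⟫| exp(-‖u‖²) du = C ‖z‖` with `C > 0`. Hence the
energy is an average of the energies of the projections `⟪u, X_i⟫`, which is nonpositive and,
by continuity in `u`, zero only if every projection has zero energy. Then for each `t` the
point masses of `∑ c_i δ_{⟪t, X_i⟫}` cancel, which makes `∑ c_i exp(i⟪t, X_i⟫)` vanish.
Conversely, since distinct characters `t ↦ exp(i⟪t, r⟫)` are linearly independent, a vanishing
characteristic function forces all point masses of `∑ c_i δ_{X_i}` to cancel, and then the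
energy is `0`.
-/

open Filter Topology Complex Real
open scoped RealInnerProductSpace

section DistEnergy

variable {ι α R : Type*} [Fintype ι]

noncomputable def distEnergy [PseudoMetricSpace α] (c : ι → ℝ) (x : ι → α) : ℝ :=
  ∑ i, ∑ j, c i * c j * dist (x i) (x j)

theorem continuous_distEnergy [PseudoMetricSpace α] (c : ι → ℝ) :
    Continuous (distEnergy (α := α) c) := by
  unfold distEnergy
  fun_prop

theorem sum_sum_mul_mul_add_eq_zero [CommRing R] {c : ι → R} (hc : ∑ i, c i = 0)
    (f g : ι → R) : ∑ i, ∑ j, c i * c j * (f i + g j) = 0 := by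
  have h : ∀ i j, c i * c j * (f i + g j) = c j * (c i * f i) + c i * (c j * g j) := by
    intro i j; ring
  simp only [h, Finset.sum_add_distrib, ← Finset.mul_sum, ← Finset.sum_mul, hc, zero_mul,
    Finset.sum_const_zero, add_zero]

theorem sum_mul_comp_eq_zero_of_fiber_sums_eq_zero [DecidableEq α] [NonUnitalNonAssocSemiring R]
    {y : ι → α} {c : ι → R} (h : ∀ r, ∑ i with y i = r, c i = 0) (f : α → R) :
    ∑ i, c i * f (y i) = 0 := by
  rw [← Finset.sum_fiberwise_of_maps_to fun i _ => Finset.mem_image_of_mem y (Finset.mem_univ i)]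
  refine Finset.sum_eq_zero fun r _ => ?_
  rw [Finset.sum_congr rfl fun i hi => by rw [(Finset.mem_filter.1 hi).2], ← Finset.sum_mul, h,
    zero_mul]

theorem distEnergy_eq_zero_of_fiber_sums_eq_zero [PseudoMetricSpace α] [DecidableEq α]
    {c : ι → ℝ} {x : ι → α} (h : ∀ r, ∑ i with x i = r, c i = 0) : distEnergy c x = 0 :=
  Finset.sum_eq_zero fun i _ => by
    simp only [mul_assoc, ← Finset.mul_sum,
      sum_mul_comp_eq_zero_of_fiber_sums_eq_zero h (dist (x i)), mul_zero]

end DistEnergy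

section Characters

variable {ι E : Type*} [Fintype ι] [NormedAddCommGroup E] [InnerProductSpace ℝ E]

noncomputable def expInnerChar (r : E) : Multiplicative E →* ℂ where
  toFun t := cexp (I * ⟪t.toAdd, r⟫)
  map_one' := by simp
  map_mul' s t := by
    rw [← Complex.exp_add, toAdd_mul, inner_add_left, ofReal_add, mul_add]

theorem expInnerChar_injective : Function.Injective (expInnerChar (E := E)) := by
  intro r r' h
  by_contra hrr'
  have hd : ‖r - r'‖ ≠ 0 := norm_ne_zero_iff.2 (sub_ne_zero.2 hrr')
  set t : E := (π / ‖r - r'‖ ^ 2) • (r - r')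
  have ht : ⟪t, r⟫ = ⟪t, r'⟫ + π := by
    rw [← sub_eq_iff_eq_add', ← inner_sub_right, real_inner_smul_left, real_inner_self_eq_norm_sq]
    field_simp
  have := DFunLike.congr_fun h (Multiplicative.ofAdd t)
  simp only [expInnerChar, MonoidHom.coe_mk, OneHom.coe_mk, toAdd_ofAdd, ht, ofReal_add,
    mul_add, Complex.exp_add, mul_comm I (π : ℂ), exp_pi_mul_I] at this
  exact Complex.exp_ne_zero (I * ⟪t, r'⟫) (by linear_combination -this / 2)

theorem fiber_sums_eq_zero_of_sum_mul_exp_inner_eq_zero [DecidableEq E] {x : ι → E} {c : ι → ℂ}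
    (h : ∀ t : E, ∑ i, c i * cexp (I * ⟪t, x i⟫) = 0) (r : E) :
    ∑ i with x i = r, c i = 0 := by
  have hli := (linearIndependent_monoidHom (Multiplicative E) ℂ).comp _ expInnerChar_injective
  refine linearIndependent_iff'.1 hli (insert r (Finset.univ.image x))
    (fun r => ∑ i with x i = r, c i) ?_ r (Finset.mem_insert_self r _)
  ext t
  simp only [Finset.sum_apply, Pi.smul_apply, smul_eq_mul, Function.comp_apply, Pi.zero_apply]
  calc ∑ r' ∈ insert r (Finset.univ.image x), (∑ i with x i = r', c i) * expInnerChar r' t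
      = ∑ r' ∈ insert r (Finset.univ.image x), ∑ i with x i = r', c i * expInnerChar (x i) t := by
        refine Finset.sum_congr rfl fun r' _ => ?_
        rw [Finset.sum_mul]
        exact Finset.sum_congr rfl fun i hi => by rw [(Finset.mem_filter.1 hi).2]
    _ = ∑ i, c i * expInnerChar (x i) t := Finset.sum_fiberwise_of_maps_to
        (fun i _ => Finset.mem_insert_of_mem (Finset.mem_image_of_mem x (Finset.mem_univ i))) _
    _ = 0 := h t.toAdd

end Characters

section Line

variable {ι : Type*} [Fintype ι]

/-- The distribution function of the signed measure `∑ i, c i • δ (y i)`. -/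
noncomputable def signedCDF (y c : ι → ℝ) (s : ℝ) : ℝ :=
  ∑ i, (Set.Ici (y i)).indicator (fun _ => c i) s

theorem signedCDF_sq (y c : ι → ℝ) (s : ℝ) :
    signedCDF y c s ^ 2 =
      ∑ i, ∑ j, (Set.Ici (max (y i) (y j))).indicator (fun _ => c i * c j) s := by
  simp only [signedCDF, sq, Finset.sum_mul_sum, ← Set.inter_indicator_mul, Set.Ici_inter_Ici]

theorem integrableOn_signedCDF_sq (y c : ι → ℝ) (a b : ℝ) :
    IntegrableOn (fun s => signedCDF y c s ^ 2) (Set.Icc a b) := by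
  simp_rw [signedCDF_sq]
  exact integrable_finsetSum _ fun i _ => integrable_finsetSum _ fun j _ =>
    (integrableOn_const measure_Icc_lt_top.ne).indicator measurableSet_Ici

theorem setIntegral_Icc_indicator_Ici {x a b : ℝ} (hx : x ∈ Set.Icc a b) (k : ℝ) :
    ∫ s in Set.Icc a b, (Set.Ici x).indicator (fun _ => k) s = k * (b - x) := by
  have hinter : Set.Icc a b ∩ Set.Ici x = Set.Icc x b := Set.ext fun s =>
    ⟨fun ⟨⟨_, hb⟩, hx'⟩ => ⟨hx', hb⟩, fun ⟨hx', hb⟩ => ⟨⟨hx.1.trans hx', hb⟩, hx'⟩⟩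
  rw [setIntegral_indicator measurableSet_Ici, hinter, setIntegral_const,
    Real.volume_real_Icc_of_le hx.2, smul_eq_mul, mul_comm]

theorem sum_sum_mul_mul_sub_max_eq {c : ι → ℝ} (hc : ∑ i, c i = 0) (y : ι → ℝ) (b : ℝ) :
    ∑ i, ∑ j, c i * c j * (b - max (y i) (y j)) = -2⁻¹ * distEnergy c y := by
  have h : ∀ i j, c i * c j * (b - max (y i) (y j))
      = c i * c j * ((b - y i) / 2 + (b - y j) / 2) + -2⁻¹ * (c i * c j * dist (y i) (y j)) := by
    intro i j
    rw [Real.dist_eq]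
    linear_combination
      (-(c i * c j) / 2) * (max_add_min (y i) (y j) + max_sub_min_eq_abs' (y i) (y j))
  simp only [h, Finset.sum_add_distrib, sum_sum_mul_mul_add_eq_zero hc, zero_add, distEnergy,
    Finset.mul_sum]

theorem integral_signedCDF_sq {c : ι → ℝ} (hc : ∑ i, c i = 0) {y : ι → ℝ} {a b : ℝ}
    (hy : ∀ i, y i ∈ Set.Icc a b) :
    ∫ s in Set.Icc a b, signedCDF y c s ^ 2 = -2⁻¹ * distEnergy c y := by
  have hint : ∀ i j, IntegrableOn ((Set.Ici (max (y i) (y j))).indicator fun _ => c i * c j)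
      (Set.Icc a b) := fun i j =>
    (integrableOn_const measure_Icc_lt_top.ne).indicator measurableSet_Ici
  have hmax : ∀ i j, max (y i) (y j) ∈ Set.Icc a b := fun i j =>
    ⟨le_max_of_le_left (hy i).1, max_le (hy i).2 (hy j).2⟩
  simp_rw [signedCDF_sq]
  rw [integral_finsetSum _ fun i _ => integrable_finsetSum _ fun j _ => hint i j]
  simp_rw [integral_finsetSum _ fun j _ => hint _ j, setIntegral_Icc_indicator_Ici (hmax _ _)]
  exact sum_sum_mul_mul_sub_max_eq hc y b

theorem exists_forall_abs_lt (y : ι → ℝ) (s : ℝ) : ∃ M, |s| < M ∧ ∀ i, |y i| < M :=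
  ⟨|s| + ∑ i, |y i| + 1,
    by linarith [Finset.sum_nonneg fun i (_ : i ∈ Finset.univ) => abs_nonneg (y i)],
    fun i => by
      linarith [Finset.single_le_sum (fun j _ => abs_nonneg (y j)) (Finset.mem_univ i),
        abs_nonneg s]⟩

theorem distEnergy_real_nonpos {c : ι → ℝ} (hc : ∑ i, c i = 0) (y : ι → ℝ) :
    distEnergy c y ≤ 0 := by
  obtain ⟨M, -, hM⟩ := exists_forall_abs_lt y 0
  have := integral_signedCDF_sq hc fun i => Set.mem_Icc.2 (abs_le.1 (hM i).le)
  have : 0 ≤ ∫ s in Set.Icc (-M) M, signedCDF y c s ^ 2 :=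
    setIntegral_nonneg measurableSet_Icc fun s _ => sq_nonneg _
  linarith

theorem eventually_signedCDF_eq_nhdsGE (y c : ι → ℝ) (s : ℝ) :
    ∀ᶠ σ in 𝓝[≥] s, signedCDF y c σ = signedCDF y c s := by
  have : ∀ i, ∀ᶠ σ in 𝓝[≥] s, (y i ≤ σ ↔ y i ≤ s) := by
    intro i
    rcases le_or_gt (y i) s with h | h
    · filter_upwards [self_mem_nhdsWithin] with σ hσ using iff_of_true (h.trans hσ) h
    · filter_upwards [nhdsWithin_le_nhds (gt_mem_nhds h)] with σ hσ
      exact iff_of_false (not_le.2 hσ) (not_le.2 h)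
  filter_upwards [eventually_all.2 this] with σ hσ
  simp only [signedCDF, Set.indicator_apply, Set.mem_Ici, hσ]

theorem eventually_signedCDF_eq_nhdsLT (y c : ι → ℝ) (r : ℝ) :
    ∀ᶠ σ in 𝓝[<] r, signedCDF y c σ = ∑ i with y i < r, c i := by
  have : ∀ i, ∀ᶠ σ in 𝓝[<] r, (y i ≤ σ ↔ y i < r) := by
    intro i
    rcases lt_or_ge (y i) r with h | h
    · filter_upwards [nhdsWithin_le_nhds (lt_mem_nhds h)] with σ hσ using iff_of_true hσ.le h
    · filter_upwards [self_mem_nhdsWithin] with σ hσ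
      exact iff_of_false (fun h' => absurd (h'.trans_lt hσ) (not_lt.2 h)) (not_lt.2 h)
  filter_upwards [eventually_all.2 this] with σ hσ
  simp only [signedCDF, Set.indicator_apply, Set.mem_Ici, hσ, Finset.sum_filter]

theorem signedCDF_eq_zero_of_distEnergy_eq_zero {c : ι → ℝ} (hc : ∑ i, c i = 0)
    {y : ι → ℝ} (h : distEnergy c y = 0) (s : ℝ) : signedCDF y c s = 0 := by
  obtain ⟨M, hsM, hM⟩ := exists_forall_abs_lt y s
  have hsq := integral_signedCDF_sq hc fun i => Set.mem_Icc.2 (abs_le.1 (hM i).le)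
  rw [h, mul_zero] at hsq
  have hae : ∀ᵐ σ ∂volume.restrict (Set.Icc (-M) M), signedCDF y c σ ^ 2 = 0 :=
    (integral_eq_zero_iff_of_nonneg (fun σ => sq_nonneg _)
      (integrableOn_signedCDF_sq y c _ _)).1 hsq
  obtain ⟨u, hsu, hu⟩ := mem_nhdsGE_iff_exists_Ico_subset.1
    ((eventually_signedCDF_eq_nhdsGE y c s).and (Ico_mem_nhdsGE (abs_lt.1 hsM).2))
  have hsub : Set.Ico s u ⊆ Set.Icc (-M) M := fun σ hσ =>
    ⟨(abs_lt.1 hsM).1.le.trans (hu hσ).2.1, (hu hσ).2.2.le⟩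
  have : (ae (volume.restrict (Set.Ico s u))).NeBot := by
    rw [ae_neBot, Ne, Measure.restrict_eq_zero, Real.volume_Ico, ENNReal.ofReal_eq_zero, not_le,
      sub_pos]
    exact hsu
  obtain ⟨σ, hσ, hσu⟩ :=
    ((ae_restrict_of_ae_restrict_of_subset hsub hae).and (ae_restrict_mem measurableSet_Ico)).exists
  rw [← (hu hσu).1]
  exact pow_eq_zero_iff two_ne_zero |>.1 hσ

theorem fiber_sums_eq_zero_of_distEnergy_eq_zero {c : ι → ℝ} (hc : ∑ i, c i = 0)
    {y : ι → ℝ} (h : distEnergy c y = 0) (r : ℝ) :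
    ∑ i with y i = r, c i = 0 := by
  obtain ⟨σ, hσ⟩ := (eventually_signedCDF_eq_nhdsLT y c r).exists
  have hF := signedCDF_eq_zero_of_distEnergy_eq_zero hc h
  calc ∑ i with y i = r, c i = signedCDF y c r - ∑ i with y i < r, c i := by
        rw [signedCDF, eq_sub_iff_add_eq, Finset.sum_filter, Finset.sum_filter,
          ← Finset.sum_add_distrib]
        refine Finset.sum_congr rfl fun i _ => ?_
        rcases lt_trichotomy (y i) r with h | h | h
        · simp [h, h.ne, h.le]
        · simp [h]
        · simp [h.ne', not_le.2 h, not_lt.2 h.le]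
    _ = 0 := by rw [← hσ, hF, hF, sub_zero]

end Line

section Projection

variable {E : Type*} [NormedAddCommGroup E] [InnerProductSpace ℝ E] [FiniteDimensional ℝ E]
  [MeasurableSpace E] [BorelSpace E]

theorem integrable_abs_inner_mul_exp_neg_sq_norm (z : E) :
    Integrable fun u : E => |⟪u, z⟫| * rexp (-‖u‖ ^ 2) := by
  have hg : Integrable fun u : E => rexp (-2⁻¹ * ‖u‖ ^ 2) := .of_integral_ne_zero <| by
    rw [GaussianFourier.integral_rexp_neg_mul_sq_norm (by norm_num)]
    positivity
  refine (hg.const_mul ‖z‖).mono' (by fun_prop) (Eventually.of_forall fun u => ?_)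
  have hu : ‖u‖ ≤ rexp (2⁻¹ * ‖u‖ ^ 2) := by
    nlinarith [Real.add_one_le_exp (2⁻¹ * ‖u‖ ^ 2), sq_nonneg (‖u‖ - 1)]
  calc ‖|⟪u, z⟫| * rexp (-‖u‖ ^ 2)‖ = |⟪u, z⟫| * rexp (-‖u‖ ^ 2) :=
        Real.norm_of_nonneg (by positivity)
    _ ≤ ‖u‖ * ‖z‖ * rexp (-‖u‖ ^ 2) := by gcongr; exact abs_real_inner_le_norm u z
    _ ≤ rexp (2⁻¹ * ‖u‖ ^ 2) * ‖z‖ * rexp (-‖u‖ ^ 2) := by gcongr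
    _ = ‖z‖ * rexp (-2⁻¹ * ‖u‖ ^ 2) := by
        rw [mul_comm (rexp _), mul_assoc, ← Real.exp_add]
        ring_nf

theorem exists_integral_abs_inner_mul_exp_neg_sq_norm_eq :
    ∃ C > 0, ∀ z : E, ∫ u, |⟪u, z⟫| * rexp (-‖u‖ ^ 2) = C * ‖z‖ := by
  rcases subsingleton_or_nontrivial E with hE | hE
  · exact ⟨1, one_pos, fun z => by simp [Subsingleton.elim z 0]⟩
  obtain ⟨e, he⟩ := exists_norm_eq E zero_le_one
  refine ⟨∫ u, |⟪u, e⟫| * rexp (-‖u‖ ^ 2), ?_, fun z => ?_⟩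
  · have hcont : Continuous fun u : E => |⟪u, e⟫| * rexp (-‖u‖ ^ 2) := by fun_prop
    refine (integral_pos_iff_support_of_nonneg (fun u => by positivity)
      (integrable_abs_inner_mul_exp_neg_sq_norm e)).2 (hcont.isOpen_support.measure_pos _ ⟨e, ?_⟩)
    simp [he]
  rcases eq_or_ne z 0 with rfl | hz
  · simp
  -- rotation invariance: a reflection `R` with `R e = z / ‖z‖` reduces `z` to `‖z‖ • e`
  let R : E ≃ₗᵢ[ℝ] E := Submodule.reflection (ℝ ∙ (e - ‖z‖⁻¹ • z))ᗮ
  have hRe : R e = ‖z‖⁻¹ • z := Submodule.reflection_sub (he.trans (norm_smul_inv_norm hz).symm)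
  have hinner : ∀ u, ⟪R u, z⟫ = ‖z‖ * ⟪u, e⟫ := fun u => by
    conv_lhs => rw [← smul_inv_smul₀ (norm_ne_zero_iff.2 hz) z, ← hRe]
    rw [real_inner_smul_right, R.inner_map_map]
  rw [← R.measurePreserving.integral_comp R.toHomeomorph.measurableEmbedding, ← integral_mul_const]
  congr 1 with u
  rw [hinner, LinearIsometryEquiv.norm_map, abs_mul, abs_norm]
  ring

end Projection

section Energy

variable {ι E : Type*} [Fintype ι] [NormedAddCommGroup E] [InnerProductSpace ℝ E]

theorem distEnergy_inner_mul_exp_neg_sq_norm_nonpos {c : ι → ℝ} (hc : ∑ i, c i = 0) (x : ι → E)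
    (u : E) : distEnergy c (fun i => ⟪u, x i⟫) * rexp (-‖u‖ ^ 2) ≤ 0 :=
  mul_nonpos_of_nonpos_of_nonneg (distEnergy_real_nonpos hc _) (exp_pos _).le

variable [FiniteDimensional ℝ E] [MeasurableSpace E] [BorelSpace E]

theorem integrable_distEnergy_inner_mul_exp_neg_sq_norm (c : ι → ℝ) (x : ι → E) :
    Integrable fun u : E => distEnergy c (fun i => ⟪u, x i⟫) * rexp (-‖u‖ ^ 2) := by
  simp only [distEnergy, Real.dist_eq, ← inner_sub_right, Finset.sum_mul, mul_assoc]
  exact integrable_finsetSum _ fun i _ => integrable_finsetSum _ fun j _ =>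
    ((integrable_abs_inner_mul_exp_neg_sq_norm _).const_mul _).const_mul _

theorem integral_distEnergy_inner_mul_exp_neg_sq_norm {C : ℝ}
    (hC : ∀ z : E, ∫ u, |⟪u, z⟫| * rexp (-‖u‖ ^ 2) = C * ‖z‖) (c : ι → ℝ) (x : ι → E) :
    ∫ u, distEnergy c (fun i => ⟪u, x i⟫) * rexp (-‖u‖ ^ 2) = C * distEnergy c x := by
  have hint : ∀ i j, Integrable fun u : E => c i * (c j * (|⟪u, x i - x j⟫| * rexp (-‖u‖ ^ 2))) :=
    fun i j => ((integrable_abs_inner_mul_exp_neg_sq_norm _).const_mul _).const_mul _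
  simp only [distEnergy, Real.dist_eq, ← inner_sub_right, Finset.sum_mul, mul_assoc]
  rw [integral_finsetSum _ fun i _ => integrable_finsetSum _ fun j _ => hint i j]
  simp only [integral_finsetSum _ fun j _ => hint _ j, integral_const_mul, hC, dist_eq_norm,
    Finset.mul_sum]
  exact Finset.sum_congr rfl fun i _ => Finset.sum_congr rfl fun j _ => by ring

theorem distEnergy_nonpos {c : ι → ℝ} (hc : ∑ i, c i = 0) (x : ι → E) : distEnergy c x ≤ 0 := by
  obtain ⟨C, hC0, hC⟩ := exists_integral_abs_inner_mul_exp_neg_sq_norm_eq (E := E)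
  have hint := integral_nonpos (μ := volume) (distEnergy_inner_mul_exp_neg_sq_norm_nonpos hc x)
  rw [integral_distEnergy_inner_mul_exp_neg_sq_norm hC] at hint
  exact nonpos_of_mul_nonpos_right hint hC0

theorem distEnergy_inner_eq_zero_of_distEnergy_eq_zero {c : ι → ℝ} (hc : ∑ i, c i = 0)
    {x : ι → E} (h : distEnergy c x = 0) (t : E) : distEnergy c (fun i => ⟪t, x i⟫) = 0 := by
  obtain ⟨C, -, hC⟩ := exists_integral_abs_inner_mul_exp_neg_sq_norm_eq (E := E)
  have hcont : Continuous fun u : E => distEnergy c (fun i => ⟪u, x i⟫) :=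
    (continuous_distEnergy c).comp (continuous_pi fun i => continuous_id.inner continuous_const)
  have hzero : (fun u : E => -(distEnergy c (fun i => ⟪u, x i⟫) * rexp (-‖u‖ ^ 2))) =ᵐ[volume] 0 :=
    (integral_eq_zero_iff_of_nonneg
      (fun u => neg_nonneg.2 (distEnergy_inner_mul_exp_neg_sq_norm_nonpos hc x u))
      (integrable_distEnergy_inner_mul_exp_neg_sq_norm c x).neg).1
      (by rw [integral_neg, integral_distEnergy_inner_mul_exp_neg_sq_norm hC, h, mul_zero,
        neg_zero])
  have : -(distEnergy c (fun i => ⟪t, x i⟫) * rexp (-‖t‖ ^ 2)) = 0 :=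
    congrFun ((Continuous.ae_eq_iff_eq volume (by fun_prop) continuous_const).1 hzero) t
  rw [neg_eq_zero, mul_eq_zero] at this
  exact this.resolve_right (exp_pos _).ne'

theorem distEnergy_eq_zero_iff {c : ι → ℝ} (hc : ∑ i, c i = 0) (x : ι → E) :
    distEnergy c x = 0 ↔ ∀ t : E, ∑ i, (c i : ℂ) * cexp (I * ⟪t, x i⟫) = 0 := by
  classical
  constructor
  · intro h t
    have hfib := fiber_sums_eq_zero_of_distEnergy_eq_zero hc
      (distEnergy_inner_eq_zero_of_distEnergy_eq_zero hc h t)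
    exact sum_mul_comp_eq_zero_of_fiber_sums_eq_zero (fun r => by exact_mod_cast hfib r)
      (fun r : ℝ => cexp (I * r))
  · intro h
    have hfib := fiber_sums_eq_zero_of_sum_mul_exp_inner_eq_zero h
    exact distEnergy_eq_zero_of_fiber_sums_eq_zero fun r => by exact_mod_cast hfib r

end Energy

section Sample

variable {p n : ℕ}

/-- The masses of the signed measure `F_{n,a,w} - F_n` at the sample points. -/
noncomputable def diffWeight (A : Fin n → Bool) (w : Fin n → ℝ) (a : Bool) (i : Fin n) : ℝ :=
  (if A i = a then w i else 0) / groupCard A a - 1 / n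

theorem sum_diffWeight {A : Fin n → Bool} {w : Fin n → ℝ} {a : Bool} (ha : groupCard A a ≠ 0)
    (hsum : ∑ i, (if A i = a then w i else 0) = (groupCard A a : ℝ)) :
    ∑ i, diffWeight A w a i = 0 := by
  have hn : (n : ℝ) ≠ 0 := by
    have : groupCard A a ≤ n := (Finset.card_filter_le _ _).trans_eq (Finset.card_fin n)
    exact_mod_cast (Nat.pos_of_ne_zero ha |>.trans_le this).ne'
  simp only [diffWeight, Finset.sum_sub_distrib, ← Finset.sum_div, hsum, Finset.sum_const,
    Finset.card_univ, Fintype.card_fin, nsmul_eq_mul]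
  rw [div_self (by exact_mod_cast ha), mul_one, div_self hn, sub_self]

theorem energyDist_eq_neg_distEnergy (X : Fin n → EuclideanSpace ℝ (Fin p)) (A : Fin n → Bool)
    (w : Fin n → ℝ) (a : Bool) : energyDist X A w a = -distEnergy (diffWeight A w a) X := by
  have hswap : ∑ i, ∑ j, (if A i = a then w i else 0) * ‖X i - X j‖
      = ∑ i, ∑ j, (if A j = a then w j else 0) * ‖X i - X j‖ := by
    rw [Finset.sum_comm]
    exact Finset.sum_congr rfl fun i _ => Finset.sum_congr rfl fun j _ => by rw [norm_sub_rev]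
  rw [energyDist, show ∀ x S : ℝ, 2 / x * S = 1 / x * S + 1 / x * S from fun x S => by ring]
  nth_rewrite 2 [hswap]
  simp only [← ite_zero_mul_ite_zero, distEnergy, Finset.mul_sum, ← Finset.sum_add_distrib,
    ← Finset.sum_sub_distrib, ← Finset.sum_neg_distrib]
  refine Finset.sum_congr rfl fun i _ => Finset.sum_congr rfl fun j _ => ?_
  simp only [diffWeight, dist_eq_norm]
  ring

theorem wECHF_sub_pooledECHF (X : Fin n → EuclideanSpace ℝ (Fin p)) (A : Fin n → Bool)
    (w : Fin n → ℝ) (a : Bool) (t : EuclideanSpace ℝ (Fin p)) :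
    wECHF X A w a t - pooledECHF X t =
      ∑ i, (diffWeight A w a i : ℂ) * cexp (I * ⟪t, X i⟫) := by
  simp only [wECHF, pooledECHF, diffWeight, Finset.mul_sum, ← Finset.sum_sub_distrib]
  refine Finset.sum_congr rfl fun i _ => ?_
  push_cast [apply_ite (fun r : ℝ => (r : ℂ))]
  ring

end Sample

theorem weighted_energy_distance_property_general (p n : ℕ)
    (X : Fin n → EuclideanSpace ℝ (Fin p)) (A : Fin n → Bool) (w : Fin n → ℝ)
    (h0 : 1 ≤ groupCard A false) (h1 : 1 ≤ groupCard A true)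
    (hsum : ∀ a : Bool, ∑ i, (if A i = a then w i else 0) = (groupCard A a : ℝ))
    (a : Bool) :
    0 ≤ energyDist X A w a ∧
      (energyDist X A w a = 0 ↔
        ∀ t : EuclideanSpace ℝ (Fin p), wECHF X A w a t = pooledECHF X t) := by
  have ha : groupCard A a ≠ 0 := by cases a <;> omega
  have hc := sum_diffWeight ha (hsum a)
  rw [energyDist_eq_neg_distEnergy, neg_nonneg, neg_eq_zero, distEnergy_eq_zero_iff hc]
  refine ⟨distEnergy_nonpos hc X, forall_congr' fun t => ?_⟩
  rw [← wECHF_sub_pooledECHF, sub_eq_zero]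

/-- Proposition 1 (distance property): the weighted energy distance is nonnegative,
and vanishes exactly when the weighted empirical characteristic function of group `a`
agrees with the pooled empirical characteristic function everywhere. -/
theorem weighted_energy_distance_property (p n : ℕ) (hp : 1 ≤ p) (hn : 1 ≤ n)
    (X : Fin n → EuclideanSpace ℝ (Fin p)) (A : Fin n → Bool) (w : Fin n → ℝ)
    (h0 : 1 ≤ groupCard A false) (h1 : 1 ≤ groupCard A true)
    (hsum : ∀ a : Bool, ∑ i, (if A i = a then w i else 0) = (groupCard A a : ℝ))
    (hpos : ∀ i, 0 < w i) (a : Bool) :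
    0 ≤ energyDist X A w a ∧
      (energyDist X A w a = 0 ↔
        ∀ t : EuclideanSpace ℝ (Fin p), wECHF X A w a t = pooledECHF X t) :=
  weighted_energy_distance_property_general p n X A w h0 h1 hsum a
end
end

section
/- (Self-normalized inverse-propensity-weighted ECDF convergence, used in the proof of Theorem 2) Let (X_i, A_i), i ≥ 1, be i.i.d. random elements of ℝ^p × {0,1} with 0 < P(A_1 = 1) < 1 and propensity score π(x) = P(A_1 = 1 | X_1 = x) satisfying 0 < π(x) < 1 almost everywhere; let F be the CDF of X_1. Fix a ∈ {0,1} and set π_a(x) = P(A_1 = a | X_1 = x) and h_a(x) = P(A_1 = a)/π_a(x) (the Radon–Nikodym derivative of the law of X_1 with respect to its conditional law given A_1 = a). Define self-normalized weights ĥ_a(X_i) = h_a(X_i) / ( (1/n_a) Σ_{j=1}^n 1{A_j = a} h_a(X_j) ). Then almost surely, F_{n,a,ĥ_a}(x) = (1/n_a) Σ_{i=1}^n ĥ_a(X_i) 1{A_i = a} 1{X_i ≤ x} converges as n → ∞ to F(x) at every continuity point x of F. -/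
open MeasureTheory ProbabilityTheory Filter Finset

noncomputable section

/-- `w` is a vector of energy balancing weights for the sample `(X, A)`:
it is feasible (nonnegative, group sums equal to group sizes) and minimizes the
sum of the two weighted energy distances over all feasible weight vectors. -/
def IsEBW {p n : ℕ} (X : Fin n → EuclideanSpace ℝ (Fin p)) (A : Fin n → Bool)
    (we : Fin n → ℝ) : Prop :=
  (∀ i, 0 ≤ we i) ∧
  (∑ i, (if A i = true then we i else 0)) = (groupCard A true : ℝ) ∧
  (∑ i, (if A i = false then we i else 0)) = (groupCard A false : ℝ) ∧
  ∀ w : Fin n → ℝ, (∀ i, 0 ≤ w i) →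
    (∑ i, (if A i = true then w i else 0)) = (groupCard A true : ℝ) →
    (∑ i, (if A i = false then w i else 0)) = (groupCard A false : ℝ) →
    energyDist X A we true + energyDist X A we false ≤
      energyDist X A w true + energyDist X A w false

open scoped Classical in
/-- Weighted empirical CDF of group `a`, with respect to the componentwise order. -/
def wECDF {p n : ℕ} (X : Fin n → EuclideanSpace ℝ (Fin p)) (A : Fin n → Bool)
    (w : Fin n → ℝ) (a : Bool) (x : EuclideanSpace ℝ (Fin p)) : ℝ :=
  (1 / (groupCard A a : ℝ)) *
    ∑ i, (if A i = a ∧ (∀ k, X i k ≤ x k) then w i else 0)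

set_option maxHeartbeats 2000000 in
/-- Self-normalized inverse-propensity-weighted ECDF convergence (used in the proof of
Theorem 2): with Radon–Nikodym weights `h_a(x) = P(A = a)/π_a(x)` normalized within
group `a`, the weighted group-`a` ECDF converges almost surely to the population CDF
`F` at every continuity point of `F`. -/
theorem self_normalized_ipw_ecdf_converges
    (p : ℕ) (hp : 1 ≤ p)
    {Ω : Type*} [MeasurableSpace Ω] (P : Measure Ω) [IsProbabilityMeasure P]
    (X : ℕ → Ω → EuclideanSpace ℝ (Fin p)) (A : ℕ → Ω → Bool)
    (hXmeas : ∀ i, Measurable (X i)) (hAmeas : ∀ i, Measurable (A i))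
    (hiid : iIndepFun (fun i ω => (X i ω, A i ω)) P)
    (hident : ∀ i, IdentDistrib (fun ω => (X i ω, A i ω)) (fun ω => (X 0 ω, A 0 ω)) P P)
    (hP1pos : 0 < P {ω | A 0 ω = true}) (hP1lt : P {ω | A 0 ω = true} < 1)
    (pi : EuclideanSpace ℝ (Fin p) → ℝ) (hpimeas : Measurable pi)
    (hpi_ver : (fun ω => pi (X 0 ω)) =ᵐ[P]
      P[(fun ω => if A 0 ω = true then (1 : ℝ) else 0)|
        MeasurableSpace.comap (X 0) inferInstance])
    (hpi_pos : ∀ᵐ x ∂(P.map (X 0)), 0 < pi x ∧ pi x < 1)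
    (a : Bool)
    -- the Radon–Nikodym weight `h_a(x) = P(A = a) / π_a(x)`
    (ha : EuclideanSpace ℝ (Fin p) → ℝ)
    (hha : ∀ x, ha x =
      (P {ω | A 0 ω = a}).toReal / (if a then pi x else 1 - pi x))
    (F : EuclideanSpace ℝ (Fin p) → ℝ)
    (hF : ∀ x, F x = (P {ω | ∀ k, X 0 ω k ≤ x k}).toReal) :
    ∀ᵐ ω ∂P, ∀ x : EuclideanSpace ℝ (Fin p), ContinuousAt F x →
      Tendsto
        (fun n =>
          wECDF (fun i : Fin n => X i ω) (fun i : Fin n => A i ω)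
            (fun i : Fin n => ha (X i ω) /
              ((1 / (groupCard (fun j : Fin n => A j ω) a : ℝ)) *
                ∑ j : Fin n, (if A j ω = a then ha (X j ω) else 0)))
            a x)
        atTop (nhds (F x)) := by
  classical
  have hb : ∀ (i : ℕ) (b : Bool), MeasurableSet {ω | A i ω = b} := fun i b =>
    (hAmeas i) (measurableSet_singleton b)
  haveI hμprob : IsProbabilityMeasure (P.map (X 0)) :=
    Measure.isProbabilityMeasure_map (hXmeas 0).aemeasurable
  -- integrability of pi
  have hpi_int : Integrable pi (P.map (X 0)) := by
    refine Integrable.mono' (integrable_const (1:ℝ)) hpimeas.aestronglyMeasurable ?_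
    filter_upwards [hpi_pos] with x hx
    rw [Real.norm_eq_abs, abs_le]
    constructor <;> linarith [hx.1, hx.2]
  -- the key conditional expectation identity for `pi`
  have hm : MeasurableSpace.comap (X 0) inferInstance ≤ (inferInstance : MeasurableSpace Ω) :=
    (hXmeas 0).comap_le
  have hind_int : Integrable (fun ω => if A 0 ω = true then (1:ℝ) else 0) P := by
    have he : (fun ω => if A 0 ω = true then (1:ℝ) else 0)
        = Set.indicator {ω | A 0 ω = true} (fun _ => (1:ℝ)) := by
      funext ω; by_cases h : A 0 ω = true <;> simp [Set.indicator_apply, h]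
    rw [he]; exact (integrable_const 1).indicator (hb 0 true)
  have hkey_true : ∀ s : Set (EuclideanSpace ℝ (Fin p)), MeasurableSet s →
      ∫ x in s, pi x ∂(P.map (X 0)) = (P ({ω | A 0 ω = true} ∩ X 0 ⁻¹' s)).toReal := by
    intro s hs
    have h1 : ∫ x in s, pi x ∂(P.map (X 0)) = ∫ ω in X 0 ⁻¹' s, pi (X 0 ω) ∂P := by
      rw [Measure.restrict_map (hXmeas 0) hs,
        integral_map (hXmeas 0).aemeasurable hpimeas.aestronglyMeasurable]
    have h2 : ∫ ω in X 0 ⁻¹' s, pi (X 0 ω) ∂P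
        = ∫ ω in X 0 ⁻¹' s, (P[(fun ω => if A 0 ω = true then (1:ℝ) else 0)|
            MeasurableSpace.comap (X 0) inferInstance]) ω ∂P :=
      integral_congr_ae (ae_restrict_of_ae hpi_ver)
    have h3 : ∫ ω in X 0 ⁻¹' s, (P[(fun ω => if A 0 ω = true then (1:ℝ) else 0)|
            MeasurableSpace.comap (X 0) inferInstance]) ω ∂P
        = ∫ ω in X 0 ⁻¹' s, (if A 0 ω = true then (1:ℝ) else 0) ∂P :=
      setIntegral_condExp hm hind_int ⟨s, hs, rfl⟩
    have h4 : ∫ ω in X 0 ⁻¹' s, (if A 0 ω = true then (1:ℝ) else 0) ∂P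
        = (P ({ω | A 0 ω = true} ∩ X 0 ⁻¹' s)).toReal := by
      have he : (fun ω => if A 0 ω = true then (1:ℝ) else 0)
          = Set.indicator {ω | A 0 ω = true} (fun _ => (1:ℝ)) := by
        funext ω; by_cases h : A 0 ω = true <;> simp [Set.indicator_apply, h]
      rw [he, setIntegral_indicator (hb 0 true), Set.inter_comm, setIntegral_const,
        smul_eq_mul, mul_one, measureReal_def]
    rw [h1, h2, h3, h4]
  -- package the case analysis on `a`
  obtain ⟨πa, hπa_meas, hha', hπa_ok, hc_pos, hkey⟩ :
      ∃ πa : EuclideanSpace ℝ (Fin p) → ℝ, Measurable πa ∧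
        (∀ x, ha x = (P {ω | A 0 ω = a}).toReal / πa x) ∧
        (∀ᵐ x ∂(P.map (X 0)), 0 < πa x ∧ πa x < 1) ∧
        0 < P {ω | A 0 ω = a} ∧
        (∀ s : Set (EuclideanSpace ℝ (Fin p)), MeasurableSet s →
          ∫ x in s, πa x ∂(P.map (X 0)) = (P ({ω | A 0 ω = a} ∩ X 0 ⁻¹' s)).toReal) := by
    cases a with
    | true => exact ⟨pi, hpimeas, by simpa using hha, hpi_pos, hP1pos, hkey_true⟩
    | false =>
      refine ⟨fun x => 1 - pi x, measurable_const.sub hpimeas, by simpa using hha, ?_, ?_, ?_⟩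
      · filter_upwards [hpi_pos] with x hx
        constructor <;> simp <;> linarith [hx.1, hx.2]
      · have hcompl : {ω | A 0 ω = false} = {ω | A 0 ω = true}ᶜ := by
          ext ω; simp
        rw [hcompl, prob_compl_eq_one_sub (hb 0 true)]
        exact tsub_pos_iff_lt.2 hP1lt
      · intro s hs
        have hint1 : Integrable (fun _ : EuclideanSpace ℝ (Fin p) => (1:ℝ))
            ((P.map (X 0)).restrict s) := integrable_const 1
        have hsub : ∫ x in s, (1 - pi x) ∂(P.map (X 0))
            = (∫ x in s, (1:ℝ) ∂(P.map (X 0))) - ∫ x in s, pi x ∂(P.map (X 0)) :=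
          integral_sub hint1 (hpi_int.restrict)
        have hone : ∫ x in s, (1:ℝ) ∂(P.map (X 0)) = (P (X 0 ⁻¹' s)).toReal := by
          rw [setIntegral_const, smul_eq_mul, mul_one, measureReal_def, Measure.map_apply (hXmeas 0) hs]
        have hsplit : P ({ω | A 0 ω = true} ∩ X 0 ⁻¹' s)
            + P ({ω | A 0 ω = false} ∩ X 0 ⁻¹' s) = P (X 0 ⁻¹' s) := by
          rw [← measure_union ?_ ((hb 0 false).inter ((hXmeas 0) hs))]
          · congr 1
            ext ω
            cases h : A 0 ω <;> simp [h]
          · exact Set.disjoint_left.2 fun ω h1 h2 => by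
              have := h1.1; have := h2.1; simp_all
        have ht1 : P ({ω | A 0 ω = true} ∩ X 0 ⁻¹' s) ≠ ⊤ := measure_ne_top _ _
        have ht2 : P ({ω | A 0 ω = false} ∩ X 0 ⁻¹' s) ≠ ⊤ := measure_ne_top _ _
        have := congrArg ENNReal.toReal hsplit
        rw [ENNReal.toReal_add ht1 ht2] at this
        rw [hsub, hone, hkey_true s hs]
        linarith
  set μ0 := P.map (X 0) with hμ0
  have hc_ne_top : P {ω | A 0 ω = a} ≠ ⊤ := measure_ne_top _ _
  set cr := (P {ω | A 0 ω = a}).toReal with hcr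
  have hcr_pos : 0 < cr := ENNReal.toReal_pos hc_pos.ne' hc_ne_top
  have hhameas : Measurable ha := by
    have : ha = fun x => cr / πa x := funext hha'
    rw [this]; exact measurable_const.div hπa_meas
  have hπa_int : Integrable πa μ0 := by
    refine Integrable.mono' (integrable_const (1:ℝ)) hπa_meas.aestronglyMeasurable ?_
    filter_upwards [hπa_ok] with x hx
    rw [Real.norm_eq_abs, abs_le]
    constructor <;> linarith [hx.1, hx.2]
  have hπa_nonneg : 0 ≤ᵐ[μ0] πa := by
    filter_upwards [hπa_ok] with x hx; exact hx.1.le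
  -- main integral identity
  have hmain : ∀ s : Set (EuclideanSpace ℝ (Fin p)), MeasurableSet s →
      Integrable (fun ω => (if A 0 ω = a then ha (X 0 ω) else 0) *
        s.indicator (fun _ => (1:ℝ)) (X 0 ω)) P ∧
      ∫ ω, (if A 0 ω = a then ha (X 0 ω) else 0) *
        s.indicator (fun _ => (1:ℝ)) (X 0 ω) ∂P = cr * (μ0 s).toReal := by
    intro s hs
    set k : Ω → ℝ := fun ω => (if A 0 ω = a then ha (X 0 ω) else 0) *
      s.indicator (fun _ => (1:ℝ)) (X 0 ω) with hk
    have hkmeas : Measurable k := by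
      apply Measurable.mul
      · have he : (fun ω => if A 0 ω = a then ha (X 0 ω) else 0)
            = Set.indicator {ω | A 0 ω = a} (fun ω => ha (X 0 ω)) := by
          funext ω; by_cases h : A 0 ω = a <;> simp [Set.indicator_apply, h]
        rw [he]; exact (hhameas.comp (hXmeas 0)).indicator (hb 0 a)
      · exact (measurable_const.indicator hs).comp (hXmeas 0)
    set g : EuclideanSpace ℝ (Fin p) → ENNReal :=
      fun x => ENNReal.ofReal (ha x * s.indicator (fun _ => (1:ℝ)) x) with hg
    have hgmeas : Measurable g :=
      ENNReal.measurable_ofReal.comp (hhameas.mul (measurable_const.indicator hs))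
    have hL1 : ∫⁻ ω, ENNReal.ofReal (k ω) ∂P
        = ∫⁻ x, g x ∂(Measure.map (X 0) (P.restrict {ω | A 0 ω = a})) := by
      rw [lintegral_map hgmeas (hXmeas 0), ← lintegral_indicator (hb 0 a)]
      apply lintegral_congr
      intro ω
      by_cases h : A 0 ω = a <;>
        simp [hk, hg, Set.indicator_apply, h]
    have hκeq : Measure.map (X 0) (P.restrict {ω | A 0 ω = a})
        = μ0.withDensity (fun x => ENNReal.ofReal (πa x)) := by
      ext u hu
      rw [Measure.map_apply (hXmeas 0) hu, Measure.restrict_apply ((hXmeas 0) hu),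
        withDensity_apply _ hu,
        ← ofReal_integral_eq_lintegral_ofReal (hπa_int.restrict)
          (ae_restrict_of_ae hπa_nonneg),
        hkey u hu, ENNReal.ofReal_toReal (measure_ne_top _ _), Set.inter_comm]
    have hL2 : ∫⁻ x, (fun x => ENNReal.ofReal (πa x)) x * g x ∂μ0
        = P {ω | A 0 ω = a} * μ0 s := by
      have hae : ∀ᵐ x ∂μ0, ENNReal.ofReal (πa x) * g x
          = s.indicator (fun _ => P {ω | A 0 ω = a}) x := by
        filter_upwards [hπa_ok] with x hx
        by_cases hxs : x ∈ s
        · rw [hg]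
          simp only [Set.indicator_of_mem hxs, mul_one]
          rw [hha' x, ← ENNReal.ofReal_mul hx.1.le,
            mul_div_cancel₀ _ hx.1.ne', ENNReal.ofReal_toReal hc_ne_top]
        · simp [hg, Set.indicator_of_notMem hxs]
      rw [lintegral_congr_ae hae, lintegral_indicator_const hs]
    have hLfin : ∫⁻ ω, ENNReal.ofReal (k ω) ∂P = P {ω | A 0 ω = a} * μ0 s := by
      rw [hL1, hκeq, lintegral_withDensity_eq_lintegral_mul μ0
        hπa_meas.ennreal_ofReal hgmeas]
      exact hL2
    have hha_nonneg : ∀ᵐ ω ∂P, 0 < ha (X 0 ω) := by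
      have := (ae_map_iff (hXmeas 0).aemeasurable
        ((measurableSet_lt measurable_const hπa_meas).inter
          (measurableSet_lt hπa_meas measurable_const))).mp hπa_ok
      filter_upwards [this] with ω hω
      rw [hha']; exact div_pos hcr_pos hω.1
    have hk_nonneg : 0 ≤ᵐ[P] k := by
      filter_upwards [hha_nonneg] with ω hω
      rw [hk]
      apply mul_nonneg
      · split_ifs; exacts [hω.le, le_rfl]
      · exact Set.indicator_nonneg (fun _ _ => zero_le_one) _
    have hint : Integrable k P := by
      refine ⟨hkmeas.aestronglyMeasurable, ?_⟩
      rw [hasFiniteIntegral_iff_ofReal hk_nonneg, hLfin]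
      exact ENNReal.mul_lt_top (measure_lt_top _ _) (measure_lt_top _ _)
    refine ⟨hint, ?_⟩
    rw [integral_eq_lintegral_of_nonneg_ae hk_nonneg hkmeas.aestronglyMeasurable, hLfin,
      ENNReal.toReal_mul]
  -- strong law of large numbers for each fixed set s
  have hslln : ∀ s : Set (EuclideanSpace ℝ (Fin p)), MeasurableSet s →
      ∀ᵐ ω ∂P, Tendsto (fun n : ℕ =>
        (∑ i ∈ range n, (if A i ω = a then ha (X i ω) else 0) *
          s.indicator (fun _ => (1:ℝ)) (X i ω)) / n) atTop (nhds (cr * (μ0 s).toReal)) := by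
    intro s hs
    obtain ⟨hint, hval⟩ := hmain s hs
    have hfmeas : Measurable (fun z : (EuclideanSpace ℝ (Fin p)) × Bool =>
        (if z.2 = a then ha z.1 else 0) * s.indicator (fun _ => (1:ℝ)) z.1) := by
      refine Measurable.mul ?_ ((measurable_const.indicator hs).comp measurable_fst)
      have he : (fun z : (EuclideanSpace ℝ (Fin p)) × Bool => if z.2 = a then ha z.1 else 0)
          = Set.indicator {z : (EuclideanSpace ℝ (Fin p)) × Bool | z.2 = a}
            (fun z => ha z.1) := by
        funext z; by_cases h : z.2 = a <;> simp [Set.indicator_apply, h]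
      rw [he]
      exact (hhameas.comp measurable_fst).indicator (measurable_snd (measurableSet_singleton a))
    have hres := strong_law_ae_real
      (fun i ω => (if A i ω = a then ha (X i ω) else 0) * s.indicator (fun _ => (1:ℝ)) (X i ω))
      hint
      (fun i j hij => (hiid.indepFun hij).comp hfmeas hfmeas)
      (fun i => (hident i).comp hfmeas)
    rw [show (P[fun ω => (if A 0 ω = a then ha (X 0 ω) else 0) *
        s.indicator (fun _ => (1:ℝ)) (X 0 ω)]) = cr * (μ0 s).toReal from hval] at hres
    exact hres
  -- measurable "quadrant" sets indexed by rational vectors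
  set Sq : (Fin p → ℚ) → Set (EuclideanSpace ℝ (Fin p)) :=
    fun v => {y | ∀ k, y k ≤ (v k : ℝ)} with hSq_def
  have hSq_meas : ∀ v, MeasurableSet (Sq v) := by
    intro v
    have : Sq v = ⋂ k, {y : EuclideanSpace ℝ (Fin p) | y k ≤ (v k : ℝ)} := by
      rw [hSq_def]; ext y; simp
    rw [this]
    have hcoord : ∀ k : Fin p, Measurable (fun y : EuclideanSpace ℝ (Fin p) => y k) :=
      fun k => (measurable_pi_apply k).comp (WithLp.measurable_ofLp 2 _)
    exact MeasurableSet.iInter fun k => measurableSet_le (hcoord k) measurable_const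
  -- assemble the almost sure events
  have e1 : ∀ᵐ ω ∂P, ∀ q : Fin p → ℚ, Tendsto (fun n : ℕ =>
      (∑ i ∈ range n, (if A i ω = a then ha (X i ω) else 0) *
        (Sq q).indicator (fun _ => (1:ℝ)) (X i ω)) / n) atTop
      (nhds (cr * (μ0 (Sq q)).toReal)) :=
    ae_all_iff.2 fun q => hslln (Sq q) (hSq_meas q)
  have e2 : ∀ᵐ ω ∂P, Tendsto (fun n : ℕ =>
      (∑ i ∈ range n, (if A i ω = a then ha (X i ω) else 0)) / n) atTop (nhds cr) := by
    have := hslln Set.univ MeasurableSet.univ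
    simpa using this
  have e3 : ∀ᵐ ω ∂P, ∀ i, 0 < ha (X i ω) := by
    rw [ae_all_iff]
    intro i
    have hmeq : P.map (X i) = P.map (X 0) := ((hident i).comp measurable_fst).map_eq
    have hXi : ∀ᵐ x ∂(P.map (X i)), 0 < πa x ∧ πa x < 1 := by
      rw [hmeq]; exact hπa_ok
    have := (ae_map_iff (hXmeas i).aemeasurable
      ((measurableSet_lt measurable_const hπa_meas).inter
        (measurableSet_lt hπa_meas measurable_const))).mp hXi
    filter_upwards [this] with ω hω
    rw [hha']; exact div_pos hcr_pos hω.1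
  filter_upwards [e1, e2, e3] with ω h1 h2 h3
  intro x hx
  -- notation for the relevant sums
  set D : ℕ → ℝ := fun n => ∑ i ∈ range n, (if A i ω = a then ha (X i ω) else 0) with hD
  set N : (Fin p → ℚ) → ℕ → ℝ := fun q n => ∑ i ∈ range n,
    (if A i ω = a then ha (X i ω) else 0) * (Sq q).indicator (fun _ => (1:ℝ)) (X i ω) with hN
  set Nx : ℕ → ℝ := fun n => ∑ i ∈ range n,
    (if A i ω = a then ha (X i ω) else 0) * (if ∀ k, X i ω k ≤ x k then (1:ℝ) else 0) with hNx
  have hterm_nonneg : ∀ i, (0:ℝ) ≤ (if A i ω = a then ha (X i ω) else 0) := fun i => by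
    split_ifs; exacts [(h3 i).le, le_rfl]
  have hD_pos : ∀ᶠ n in atTop, 0 < D n := by
    have hhalf : ∀ᶠ n in atTop, cr / 2 < D n / n :=
      h2.eventually (eventually_gt_nhds (half_lt_self hcr_pos))
    filter_upwards [hhalf, eventually_ge_atTop 1] with n hn hn1
    by_contra hcon
    push_neg at hcon
    have : D n / n ≤ 0 := div_nonpos_of_nonpos_of_nonneg hcon (Nat.cast_nonneg n)
    linarith [half_pos hcr_pos]
  -- identification of the weighted ECDF with a ratio of sums
  have hwecdf : ∀ n : ℕ, 0 < D n →
      wECDF (fun i : Fin n => X i ω) (fun i : Fin n => A i ω)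
        (fun i : Fin n => ha (X i ω) /
          ((1 / (groupCard (fun j : Fin n => A j ω) a : ℝ)) *
            ∑ j : Fin n, (if A j ω = a then ha (X j ω) else 0)))
        a x = Nx n / D n := by
    intro n hDn
    have hsum_fin : (∑ j : Fin n, (if A j ω = a then ha (X j ω) else 0)) = D n :=
      Fin.sum_univ_eq_sum_range (fun i => if A i ω = a then ha (X i ω) else 0) n
    have hsum_fin2 : (∑ i : Fin n,
        (if A i ω = a then ha (X i ω) else 0) * (if ∀ k, X i ω k ≤ x k then (1:ℝ) else 0)) = Nx n :=
      Fin.sum_univ_eq_sum_range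
        (fun i => (if A i ω = a then ha (X i ω) else 0) * (if ∀ k, X i ω k ≤ x k then (1:ℝ) else 0)) n
    have hm_pos : 0 < ((groupCard (fun j : Fin n => A j ω) a : ℕ) : ℝ) := by
      have hcard : groupCard (fun j : Fin n => A j ω) a ≠ 0 := by
        intro hm0
        have hall : ∀ j : Fin n, ¬ (A j ω = a) := by
          intro j hj
          have hmem : j ∈ Finset.univ.filter (fun i : Fin n => A i ω = a) :=
            mem_filter.2 ⟨mem_univ _, hj⟩
          rw [groupCard] at hm0
          rw [card_eq_zero] at hm0
          rw [hm0] at hmem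
          exact notMem_empty j hmem
        have hzero : D n = 0 := by
          rw [← hsum_fin]
          exact Finset.sum_eq_zero fun j _ => if_neg (hall j)
        rw [hzero] at hDn
        exact lt_irrefl 0 hDn
      exact_mod_cast Nat.pos_of_ne_zero hcard
    simp only [wECDF]
    rw [hsum_fin]
    set m : ℝ := ((groupCard (fun j : Fin n => A j ω) a : ℕ) : ℝ) with hmdef
    have hrw : ∀ i : Fin n,
        (if A i ω = a ∧ (∀ k, X i ω k ≤ x k) then ha (X i ω) / ((1/m) * D n) else 0)
        = (1 / ((1/m) * D n)) *
          ((if A i ω = a then ha (X i ω) else 0) * (if ∀ k, X i ω k ≤ x k then (1:ℝ) else 0)) := by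
      intro i
      by_cases hA : A i ω = a
      · by_cases hxk : ∀ k, X i ω k ≤ x k
        · rw [if_pos ⟨hA, hxk⟩, if_pos hA, if_pos hxk]; ring
        · rw [if_neg (fun h => hxk h.2), if_pos hA, if_neg hxk]; ring
      · rw [if_neg (fun h => hA h.1), if_neg hA]; ring
    rw [Finset.sum_congr rfl (fun i _ => hrw i), ← Finset.mul_sum, hsum_fin2]
    field_simp
  -- monotonicity of the numerator sums
  have hmono_lo : ∀ (q : Fin p → ℚ) (n : ℕ), (∀ k, (q k : ℝ) ≤ x k) → N q n ≤ Nx n := by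
    intro q n hq
    apply Finset.sum_le_sum
    intro i _
    apply mul_le_mul_of_nonneg_left _ (hterm_nonneg i)
    by_cases hxk : X i ω ∈ Sq q
    · have hxk' : ∀ k, X i ω k ≤ (q k : ℝ) := hxk
      rw [Set.indicator_of_mem hxk, if_pos (fun k => le_trans (hxk' k) (hq k))]
    · rw [Set.indicator_of_notMem hxk]
      split_ifs <;> norm_num
  have hmono_hi : ∀ (r : Fin p → ℚ) (n : ℕ), (∀ k, x k ≤ (r k : ℝ)) → Nx n ≤ N r n := by
    intro r n hr
    apply Finset.sum_le_sum
    intro i _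
    apply mul_le_mul_of_nonneg_left _ (hterm_nonneg i)
    by_cases hxk : ∀ k, X i ω k ≤ x k
    · have hmem : X i ω ∈ Sq r := fun k => le_trans (hxk k) (hr k)
      rw [if_pos hxk, Set.indicator_of_mem hmem]
    · rw [if_neg hxk]
      exact Set.indicator_nonneg (fun _ _ => zero_le_one) _
  -- limits of the ratios
  have hratio : ∀ q : Fin p → ℚ,
      Tendsto (fun n => N q n / D n) atTop (nhds ((μ0 (Sq q)).toReal)) := by
    intro q
    have hdivdiv : ∀ (a b c : ℝ), c ≠ 0 → (a / c) / (b / c) = a / b := by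
      intro a b c hc
      rcases eq_or_ne b 0 with h | h
      · simp [h]
      · field_simp
    have hdiv := (h1 q).div h2 hcr_pos.ne'
    rw [mul_div_cancel_left₀ _ hcr_pos.ne'] at hdiv
    refine Tendsto.congr' ?_ hdiv
    filter_upwards [eventually_ge_atTop 1] with n hn
    have hn0 : (n:ℝ) ≠ 0 := Nat.cast_ne_zero.2 (by omega)
    simp only [Pi.div_apply]
    exact hdivdiv _ _ _ hn0
  -- the final ε-argument
  rw [Metric.tendsto_atTop]
  intro ε hε
  obtain ⟨δ, hδpos, hδ⟩ := Metric.continuousAt_iff.1 hx (ε/4) (by positivity)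
  set η := δ / (p + 1) with hη
  have hηpos : 0 < η := by positivity
  have hqex : ∀ k : Fin p, ∃ qk : ℚ, x k - η < (qk:ℝ) ∧ (qk:ℝ) < x k := fun k =>
    exists_rat_btwn (by linarith)
  choose q hq1 hq2 using hqex
  have hrex : ∀ k : Fin p, ∃ rk : ℚ, x k < (rk:ℝ) ∧ (rk:ℝ) < x k + η := fun k =>
    exists_rat_btwn (by linarith)
  choose r hr1 hr2 using hrex
  set qv : EuclideanSpace ℝ (Fin p) := WithLp.toLp 2 (fun k => (q k : ℝ)) with hqv
  set rv : EuclideanSpace ℝ (Fin p) := WithLp.toLp 2 (fun k => (r k : ℝ)) with hrv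
  have hdistbound : ∀ (y : EuclideanSpace ℝ (Fin p)), (∀ k, dist (y k) (x k) < η) →
      dist y x < δ := by
    intro y hy
    rw [EuclideanSpace.dist_eq]
    have hsum : (∑ k, dist (y k) (x k) ^ 2) ≤ (p : ℝ) * η ^ 2 := by
      calc (∑ k, dist (y k) (x k) ^ 2) ≤ ∑ _k : Fin p, η ^ 2 := by
            apply Finset.sum_le_sum
            intro k _
            have h1 := hy k
            have h2 : (0:ℝ) ≤ dist (y k) (x k) := dist_nonneg
            nlinarith
        _ = (p : ℝ) * η ^ 2 := by
            rw [Finset.sum_const, Finset.card_univ, Fintype.card_fin, nsmul_eq_mul]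
    have h1p : (1:ℝ) ≤ p := by exact_mod_cast hp
    calc Real.sqrt (∑ k, dist (y k) (x k) ^ 2) ≤ Real.sqrt ((p:ℝ) * η ^ 2) :=
          Real.sqrt_le_sqrt hsum
      _ = Real.sqrt p * η := by
          rw [Real.sqrt_mul (by positivity), Real.sqrt_sq hηpos.le]
      _ ≤ (p:ℝ) * η := by
          have hsq : Real.sqrt p ≤ (p:ℝ) := by
            have h := Real.sqrt_le_sqrt (show (p:ℝ) ≤ (p:ℝ)^2 by nlinarith)
            rwa [Real.sqrt_sq (by positivity)] at h
          exact mul_le_mul_of_nonneg_right hsq hηpos.le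
      _ < δ := by
          rw [hη]
          rw [show (p:ℝ) * (δ / (p+1)) = δ * ((p:ℝ) / (p+1)) by ring]
          have : (p:ℝ) / (p+1) < 1 := (div_lt_one (by positivity)).2 (lt_add_one _)
          calc δ * ((p:ℝ)/(p+1)) < δ * 1 := by
                exact mul_lt_mul_of_pos_left this hδpos
            _ = δ := mul_one δ
  have hdq : dist (F qv) (F x) < ε/4 := by
    apply hδ
    apply hdistbound
    intro k
    rw [Real.dist_eq, abs_lt]
    constructor
    · have := hq1 k; simp only [hqv]; linarith
    · have := hq2 k; simp only [hqv]; linarith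
  have hdr : dist (F rv) (F x) < ε/4 := by
    apply hδ
    apply hdistbound
    intro k
    rw [Real.dist_eq, abs_lt]
    constructor
    · have := hr1 k; simp only [hrv]; linarith
    · have := hr2 k; simp only [hrv]; linarith
  have hFset : ∀ v : Fin p → ℚ, (μ0 (Sq v)).toReal
      = F (WithLp.toLp 2 (fun k => (v k : ℝ))) := by
    intro v
    rw [hF, hμ0, Measure.map_apply (hXmeas 0) (hSq_meas v)]
    congr 1
  have hLq : Tendsto (fun n => N q n / D n) atTop (nhds (F qv)) := by
    have := hratio q
    rwa [hFset q] at this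
  have hLr : Tendsto (fun n => N r n / D n) atTop (nhds (F rv)) := by
    have := hratio r
    rwa [hFset r] at this
  have habsq : |F qv - F x| < ε/4 := by rwa [← Real.dist_eq]
  have habsr : |F rv - F x| < ε/4 := by rwa [← Real.dist_eq]
  rw [abs_lt] at habsq habsr
  have hbq : ∀ᶠ n in atTop, F qv - ε/4 < N q n / D n :=
    hLq.eventually (eventually_gt_nhds (by linarith))
  have hbr : ∀ᶠ n in atTop, N r n / D n < F rv + ε/4 :=
    hLr.eventually (eventually_lt_nhds (by linarith))
  have hev : ∀ᶠ n in atTop,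
      dist (wECDF (fun i : Fin n => X i ω) (fun i : Fin n => A i ω)
        (fun i : Fin n => ha (X i ω) /
          ((1 / (groupCard (fun j : Fin n => A j ω) a : ℝ)) *
            ∑ j : Fin n, (if A j ω = a then ha (X j ω) else 0)))
        a x) (F x) < ε := by
    filter_upwards [hbq, hbr, hD_pos] with n h4 h5 h6
    rw [hwecdf n h6, Real.dist_eq, abs_lt]
    have hub : Nx n / D n ≤ N r n / D n := by
      apply div_le_div_of_nonneg_right ?_ h6.le
      · exact hmono_hi r n (fun k => (hr1 k).le)
    have hlb : N q n / D n ≤ Nx n / D n := by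
      apply div_le_div_of_nonneg_right ?_ h6.le
      · exact hmono_lo q n (fun k => (hq2 k).le)
    constructor <;> linarith
  obtain ⟨Nbound, hNbound⟩ := eventually_atTop.1 hev
  exact ⟨Nbound, hNbound⟩


end
end
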